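/- Let μ be a σ-finite measure on 𝒳 and let q, q', r be probability densities with respect to μ, with associated probability measures Q = q·μ, Q' = q'·μ, R = r·μ. With ψ₂(x) = (x−1)/√(x²+1) extended by ψ₂(+∞) = 1 and the conventions 0/0 = 1 and a/0 = +∞ for a > 0, one has ∫ ψ₂(√(q'(x)/q(x))) dR(x) ≤ 4.97·h²(R,Q) − 0.083·h²(R,Q') and ∫ ψ₂²(√(q'(x)/q(x))) dR(x) ≤ (3+2√2)·[h²(R,Q) + h²(R,Q')], where h² denotes squared Hellinger distance. -/

import Mathlib

open MeasureTheory ENNReal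

open Classical in
/-- The ratio `q'/q` in `[0,+∞]`, with the conventions `0/0 = 1` and `a/0 = +∞` for
`a > 0` (the latter being automatic in `ℝ≥0∞`). -/
noncomputable def densityRatio {𝒳 : Type*} (q q' : 𝒳 → ℝ≥0∞) (x : 𝒳) : ℝ≥0∞ :=
  if q x = 0 ∧ q' x = 0 then 1 else q' x / q x

/-- `ψ₂(√z)` for `z ∈ [0,+∞]`, where `ψ₂(x) = (x−1)/√(x²+1)` and `ψ₂(+∞) = 1`. -/
noncomputable def psi2OfSqrt (z : ℝ≥0∞) : ℝ :=
  if z = ⊤ then 1 else (Real.sqrt z.toReal - 1) / Real.sqrt (z.toReal + 1)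

/-- Squared Hellinger distance `(1/2)∫(√a − √b)² dμ` between the probabilities of
densities `a` and `b` with respect to `μ`. -/
noncomputable def hellingerSqDens {𝒳 : Type*} [MeasurableSpace 𝒳] (μ : Measure 𝒳)
    (a b : 𝒳 → ℝ≥0∞) : ℝ :=
  (1/2) * ∫ x, (Real.sqrt (a x).toReal - Real.sqrt (b x).toReal) ^ 2 ∂μ

/-!
Write `s = √r`, `a = √q`, `b = √q'`. Then `ψ₂(√(q'/q)) = (b - a) / √(a² + b²)` wherever `q, q'`
are finite, and both bounds integrate pointwise inequalities against `μ`: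
`s² ψ ≤ 4.97/2 (s - a)² - 0.083/2 (s - b)² + √2/4 (b² - a²)`, whose last term integrates to `0`
because `Q` and `Q'` have the same mass, and `s² ψ² ≤ (s - a)² + (s - b)²`, which is
Cauchy–Schwarz and even gives the second bound with `2` in place of `3 + 2√2`.
For the first inequality, `√(a² + b²)` is bounded below by `(a + b)/√2` when `a ≤ b` and above
by `a + (√2 - 1) b` when `b ≤ a`; this leaves a cubic polynomial inequality in each case.
-/

theorem quadratic_form_nonneg_of_discrim_nonpos {A B C : ℝ} (hA : 0 < A)
    (h : discrim A B C ≤ 0) (x y : ℝ) : 0 ≤ A * x ^ 2 + B * (x * y) + C * y ^ 2 := by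
  have key : 4 * A * (A * x ^ 2 + B * (x * y) + C * y ^ 2) =
      (2 * A * x + B * y) ^ 2 - discrim A B C * y ^ 2 := by
    rw [discrim]; ring
  refine nonneg_of_mul_nonneg_right ?_ (by positivity : (0 : ℝ) < 4 * A)
  rw [key]
  nlinarith [sq_nonneg (2 * A * x + B * y), mul_nonneg (neg_nonneg.2 h) (sq_nonneg y)]

theorem sqrt_two_mem_Icc : √2 ∈ Set.Icc (1.4142 : ℝ) 1.4143 := by
  have := Real.sq_sqrt (show (0 : ℝ) ≤ 2 by norm_num)
  have := Real.sqrt_nonneg 2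
  constructor <;> nlinarith

section PointwiseBounds

variable {a b : ℝ}

theorem sub_div_sqrt_sq_add_sq_le_of_le (ha : 0 ≤ a) (hab : a ≤ b) (hb : 0 < b) :
    (b - a) / √(a ^ 2 + b ^ 2) ≤ √2 * (b - a) / (a + b) := by
  have hle : a + b ≤ √2 * √(a ^ 2 + b ^ 2) := by
    rw [← Real.sqrt_mul zero_le_two]
    exact Real.le_sqrt_of_sq_le (by nlinarith [sq_nonneg (a - b)])
  rw [mul_comm, ← div_div_eq_mul_div]
  exact div_le_div_of_nonneg_left (by linarith) (by positivity)
    ((div_le_iff₀' (by positivity)).2 hle)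

theorem sub_div_sqrt_sq_add_sq_le_of_ge (hb : 0 ≤ b) (hba : b ≤ a) (ha : 0 < a) :
    (b - a) / √(a ^ 2 + b ^ 2) ≤ (b - a) / (a + (√2 - 1) * b) := by
  have hw : 0 ≤ √2 - 1 := by linarith [sqrt_two_mem_Icc.1]
  have hD : 0 < a + (√2 - 1) * b := add_pos_of_pos_of_nonneg ha (mul_nonneg hw hb)
  have hle : √(a ^ 2 + b ^ 2) ≤ a + (√2 - 1) * b := by
    refine Real.sqrt_le_iff.2 ⟨hD.le, ?_⟩
    have := Real.sq_sqrt (show (0 : ℝ) ≤ 2 by norm_num)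
    nlinarith [mul_nonneg (mul_nonneg hw hb) (sub_nonneg.2 hba)]
  rw [← neg_sub a b, neg_div, neg_div, neg_le_neg_iff]
  exact div_le_div_of_nonneg_left (by linarith) (Real.sqrt_pos.2 (by positivity)) hle

/- In both cases the polynomial inequality `hpoly` is certified by writing the difference of its
two sides as a combination, with nonnegative weights among `a`, `b`, `|a - b|`, of binary
quadratic forms in `a - s` and `a - b` whose discriminants are checked with
`√2 ∈ [1.4142, 1.4143]`. -/

theorem sq_mul_sub_div_sqrt_le_of_le (s : ℝ) (ha : 0 ≤ a) (hab : a ≤ b) (hb : 0 < b) :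
    s ^ 2 * ((b - a) / √(a ^ 2 + b ^ 2)) ≤
      4.97 / 2 * (s - a) ^ 2 - 0.083 / 2 * (s - b) ^ 2 + √2 / 4 * (b ^ 2 - a ^ 2) := by
  obtain ⟨hw₁, hw₂⟩ := sqrt_two_mem_Icc
  have hw := Real.sq_sqrt (show (0 : ℝ) ≤ 2 by norm_num)
  have hQ₁ := quadratic_form_nonneg_of_discrim_nonpos (A := 4.887) (B := 2 * √2 - 0.166)
    (C := √2 - 0.083) (by norm_num) (by rw [discrim]; nlinarith) (a - s) (b - a)
  have hQ₂ := quadratic_form_nonneg_of_discrim_nonpos (A := 2.4435 - √2) (B := -0.083)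
    (C := √2 / 4 - 0.0415) (by linarith) (by rw [discrim]; nlinarith) (a - s) (b - a)
  have hpoly : √2 * (s ^ 2 * (b - a)) ≤
      (a + b) * (4.97 / 2 * (s - a) ^ 2 - 0.083 / 2 * (s - b) ^ 2 + √2 / 4 * (b ^ 2 - a ^ 2)) := by
    linear_combination mul_nonneg ha hQ₁ + mul_nonneg (sub_nonneg.2 hab) hQ₂
  calc s ^ 2 * ((b - a) / √(a ^ 2 + b ^ 2))
      ≤ s ^ 2 * (√2 * (b - a) / (a + b)) :=
        mul_le_mul_of_nonneg_left (sub_div_sqrt_sq_add_sq_le_of_le ha hab hb) (sq_nonneg s)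
    _ ≤ _ := by
        rw [mul_div_assoc', div_le_iff₀' (by linarith)]
        linarith

theorem sq_mul_sub_div_sqrt_le_of_ge (s : ℝ) (hb : 0 ≤ b) (hba : b ≤ a) (ha : 0 < a) :
    s ^ 2 * ((b - a) / √(a ^ 2 + b ^ 2)) ≤
      4.97 / 2 * (s - a) ^ 2 - 0.083 / 2 * (s - b) ^ 2 + √2 / 4 * (b ^ 2 - a ^ 2) := by
  obtain ⟨hw₁, hw₂⟩ := sqrt_two_mem_Icc
  have hw := Real.sq_sqrt (show (0 : ℝ) ≤ 2 by norm_num)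
  have hQ₃ := quadratic_form_nonneg_of_discrim_nonpos (A := 2.4435 * √2 - 1)
    (B := 0.083 * √2 - 2) (C := 1.3 - 0.5415 * √2) (by linarith) (by rw [discrim]; nlinarith)
    (a - s) (a - b)
  have hQ₄ := quadratic_form_nonneg_of_discrim_nonpos (A := 4.4435 - 2.4435 * √2)
    (B := 0.083 * (1 - √2)) (C := 0.2915 * √2 - 0.3415) (by linarith)
    (by rw [discrim]; nlinarith) (a - s) (a - b)
  have hQ₅ : 0 ≤ (a - s) ^ 2 + (a - b) ^ 2 / 5 := by positivity
  have hpoly : s ^ 2 * (b - a) ≤ (a + (√2 - 1) * b) *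
      (4.97 / 2 * (s - a) ^ 2 - 0.083 / 2 * (s - b) ^ 2 + √2 / 4 * (b ^ 2 - a ^ 2)) := by
    linear_combination mul_nonneg ha.le hQ₃ + mul_nonneg (sub_nonneg.2 hba) hQ₄ +
      mul_nonneg hb hQ₅ + (b * (a ^ 2 - b ^ 2) / 4) * hw
  have hD : 0 < a + (√2 - 1) * b := by nlinarith
  calc s ^ 2 * ((b - a) / √(a ^ 2 + b ^ 2))
      ≤ s ^ 2 * ((b - a) / (a + (√2 - 1) * b)) :=
        mul_le_mul_of_nonneg_left (sub_div_sqrt_sq_add_sq_le_of_ge hb hba ha) (sq_nonneg s)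
    _ ≤ _ := by
        rw [mul_div_assoc', div_le_iff₀' hD]
        linarith

theorem sq_mul_sub_div_sqrt_le (s : ℝ) (ha : 0 ≤ a) (hb : 0 ≤ b) :
    s ^ 2 * ((b - a) / √(a ^ 2 + b ^ 2)) ≤
      4.97 / 2 * (s - a) ^ 2 - 0.083 / 2 * (s - b) ^ 2 + √2 / 4 * (b ^ 2 - a ^ 2) := by
  by_cases h₀ : a = 0 ∧ b = 0
  · obtain ⟨rfl, rfl⟩ := h₀
    norm_num
    nlinarith [sq_nonneg s]
  rcases le_total a b with hab | hba
  · exact sq_mul_sub_div_sqrt_le_of_le s ha hab (hb.lt_of_ne fun h ↦ h₀ ⟨by linarith, h.symm⟩)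
  · exact sq_mul_sub_div_sqrt_le_of_ge s hb hba (ha.lt_of_ne fun h ↦ h₀ ⟨h.symm, by linarith⟩)

/- `s (b - a) = b (s - a) - a (s - b)`, so this is the Cauchy–Schwarz inequality in `ℝ²`. -/
theorem sq_mul_sub_div_sqrt_sq_le (s a b : ℝ) :
    s ^ 2 * ((b - a) / √(a ^ 2 + b ^ 2)) ^ 2 ≤ (s - a) ^ 2 + (s - b) ^ 2 := by
  rcases (add_nonneg (sq_nonneg a) (sq_nonneg b)).eq_or_lt with h₀ | hpos
  · simp [← h₀]
    positivity
  rw [div_pow, Real.sq_sqrt hpos.le, mul_div_assoc', div_le_iff₀ hpos]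
  nlinarith [sq_nonneg (a * (s - a) + b * (s - b))]

end PointwiseBounds

theorem psi2OfSqrt_densityRatio {𝒳 : Type*} {q q' : 𝒳 → ℝ≥0∞} {x : 𝒳} (hq : q x ≠ ∞)
    (hq' : q' x ≠ ∞) :
    psi2OfSqrt (densityRatio q q' x) =
      (√(q' x).toReal - √(q x).toReal) / √((q x).toReal + (q' x).toReal) := by
  by_cases h₀ : q x = 0
  · by_cases h₀' : q' x = 0
    · simp [densityRatio, psi2OfSqrt, h₀, h₀']
    · have hpos : 0 < √(q' x).toReal := Real.sqrt_pos.2 (toReal_pos h₀' hq')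
      simp [densityRatio, psi2OfSqrt, h₀, h₀', ENNReal.div_zero h₀', div_self hpos.ne']
  · have hu : 0 < (q x).toReal := toReal_pos h₀ hq
    have hsum : (q' x).toReal / (q x).toReal + 1 =
        ((q x).toReal + (q' x).toReal) / (q x).toReal := by
      field_simp
      ring
    simp only [densityRatio, psi2OfSqrt, h₀, false_and, if_false, div_eq_top, hq', false_or,
      and_false, toReal_div]
    rw [Real.sqrt_div toReal_nonneg, hsum, Real.sqrt_div (by positivity)]
    have : 0 < √(q x).toReal := Real.sqrt_pos.2 hu
    field_simp

theorem abs_psi2OfSqrt_le_one (z : ℝ≥0∞) : |psi2OfSqrt z| ≤ 1 := by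
  unfold psi2OfSqrt
  split_ifs
  · simp
  · have hpos : 0 < √(z.toReal + 1) := Real.sqrt_pos.2 (by positivity)
    rw [abs_div, abs_of_pos hpos, div_le_one hpos]
    refine Real.abs_le_sqrt ?_
    nlinarith [Real.sq_sqrt (toReal_nonneg (a := z)), Real.sqrt_nonneg z.toReal]

theorem measurable_psi2OfSqrt : Measurable psi2OfSqrt :=
  Measurable.ite (measurableSet_singleton ⊤) measurable_const (by fun_prop)

theorem Measurable.densityRatio {𝒳 : Type*} [MeasurableSpace 𝒳] {q q' : 𝒳 → ℝ≥0∞}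
    (hq : Measurable q) (hq' : Measurable q') : Measurable (densityRatio q q') := by
  classical
  exact Measurable.ite ((measurableSet_singleton 0).preimage hq |>.inter
    ((measurableSet_singleton 0).preimage hq')) measurable_const (hq'.div hq)

theorem toReal_mul_psi2OfSqrt_densityRatio_le {𝒳 : Type*} {r q q' : 𝒳 → ℝ≥0∞} {x : 𝒳} (hq : q x ≠ ∞)
    (hq' : q' x ≠ ∞) :
    (r x).toReal * psi2OfSqrt (densityRatio q q' x) ≤
      4.97 / 2 * (√(r x).toReal - √(q x).toReal) ^ 2
        - 0.083 / 2 * (√(r x).toReal - √(q' x).toReal) ^ 2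
        + √2 / 4 * ((q' x).toReal - (q x).toReal) := by
  have h := sq_mul_sub_div_sqrt_le √(r x).toReal (Real.sqrt_nonneg (q x).toReal)
    (Real.sqrt_nonneg (q' x).toReal)
  simp only [Real.sq_sqrt toReal_nonneg] at h
  rwa [psi2OfSqrt_densityRatio hq hq']

theorem toReal_mul_psi2OfSqrt_densityRatio_sq_le {𝒳 : Type*} {r q q' : 𝒳 → ℝ≥0∞} {x : 𝒳}
    (hq : q x ≠ ∞) (hq' : q' x ≠ ∞) :
    (r x).toReal * psi2OfSqrt (densityRatio q q' x) ^ 2 ≤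
      (√(r x).toReal - √(q x).toReal) ^ 2 + (√(r x).toReal - √(q' x).toReal) ^ 2 := by
  have h := sq_mul_sub_div_sqrt_sq_le √(r x).toReal √(q x).toReal √(q' x).toReal
  simp only [Real.sq_sqrt toReal_nonneg] at h
  rwa [psi2OfSqrt_densityRatio hq hq']

section Integrals

variable {𝒳 : Type*} [MeasurableSpace 𝒳] {μ : Measure 𝒳} {r q q' : 𝒳 → ℝ≥0∞}

theorem hellingerSqDens_nonneg (a b : 𝒳 → ℝ≥0∞) : 0 ≤ hellingerSqDens μ a b :=
  mul_nonneg (by norm_num) (integral_nonneg fun _ ↦ sq_nonneg _)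

theorem integrable_sqrt_toReal_sub_sqrt_toReal_sq (hr : AEMeasurable r μ) (hq : AEMeasurable q μ)
    (hr_fin : ∫⁻ x, r x ∂μ ≠ ∞) (hq_fin : ∫⁻ x, q x ∂μ ≠ ∞) :
    Integrable (fun x ↦ (√(r x).toReal - √(q x).toReal) ^ 2) μ := by
  refine (integrable_toReal_of_lintegral_ne_top hr hr_fin |>.add
    (integrable_toReal_of_lintegral_ne_top hq hq_fin)).mono' (by fun_prop)
    (ae_of_all _ fun x ↦ ?_)
  rw [Real.norm_of_nonneg (sq_nonneg _), sub_sq, Real.sq_sqrt toReal_nonneg,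
    Real.sq_sqrt toReal_nonneg]
  have := mul_nonneg (Real.sqrt_nonneg (r x).toReal) (Real.sqrt_nonneg (q x).toReal)
  simp only [Pi.add_apply]
  linarith

theorem integrable_toReal_mul_psi2OfSqrt_densityRatio_pow (n : ℕ) (hr : Measurable r)
    (hq : Measurable q) (hq' : Measurable q') (hr_fin : ∫⁻ x, r x ∂μ ≠ ∞) :
    Integrable (fun x ↦ (r x).toReal * psi2OfSqrt (densityRatio q q' x) ^ n) μ :=
  (integrable_toReal_of_lintegral_ne_top hr.aemeasurable hr_fin).mul_bdd
    ((measurable_psi2OfSqrt.comp (hq.densityRatio hq')).pow_const n).aestronglyMeasurable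
    (ae_of_all _ fun x ↦ by
      rw [norm_pow, Real.norm_eq_abs]
      exact pow_le_one₀ (abs_nonneg _) (abs_psi2OfSqrt_le_one _))

theorem integral_psi2OfSqrt_densityRatio_le (hr : Measurable r) (hq : Measurable q)
    (hq' : Measurable q') (hr_fin : ∫⁻ x, r x ∂μ ≠ ∞) (hq_fin : ∫⁻ x, q x ∂μ ≠ ∞)
    (hq'q : ∫⁻ x, q' x ∂μ = ∫⁻ x, q x ∂μ) :
    ∫ x, psi2OfSqrt (densityRatio q q' x) ∂μ.withDensity r ≤
      4.97 * hellingerSqDens μ r q - 0.083 * hellingerSqDens μ r q' := by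
  have hq'_fin : ∫⁻ x, q' x ∂μ ≠ ∞ := hq'q ▸ hq_fin
  have hA := integrable_sqrt_toReal_sub_sqrt_toReal_sq hr.aemeasurable hq.aemeasurable hr_fin hq_fin
  have hB := integrable_sqrt_toReal_sub_sqrt_toReal_sq hr.aemeasurable hq'.aemeasurable hr_fin
    hq'_fin
  have hqi := integrable_toReal_of_lintegral_ne_top hq.aemeasurable hq_fin
  have hq'i := integrable_toReal_of_lintegral_ne_top hq'.aemeasurable hq'_fin
  have hmass : ∫ x, (q' x).toReal ∂μ = ∫ x, (q x).toReal ∂μ := by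
    rw [integral_toReal hq'.aemeasurable (ae_lt_top hq' hq'_fin),
      integral_toReal hq.aemeasurable (ae_lt_top hq hq_fin), hq'q]
  simp_rw [integral_withDensity_eq_integral_toReal_smul hr (ae_lt_top hr hr_fin), smul_eq_mul]
  calc ∫ x, (r x).toReal * psi2OfSqrt (densityRatio q q' x) ∂μ
      ≤ ∫ x, 4.97 / 2 * (√(r x).toReal - √(q x).toReal) ^ 2
          - 0.083 / 2 * (√(r x).toReal - √(q' x).toReal) ^ 2
          + √2 / 4 * ((q' x).toReal - (q x).toReal) ∂μ := by
        refine integral_mono_ae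
          (by simpa using integrable_toReal_mul_psi2OfSqrt_densityRatio_pow 1 hr hq hq' hr_fin)
          (((hA.const_mul _).sub (hB.const_mul _)).add ((hq'i.sub hqi).const_mul _)) ?_
        filter_upwards [ae_lt_top hq hq_fin, ae_lt_top hq' hq'_fin] with x hx hx'
        exact toReal_mul_psi2OfSqrt_densityRatio_le hx.ne hx'.ne
    _ = 4.97 * hellingerSqDens μ r q - 0.083 * hellingerSqDens μ r q' := by
        rw [integral_add, integral_sub, integral_const_mul, integral_const_mul,
          integral_const_mul, integral_sub hq'i hqi, hmass, hellingerSqDens, hellingerSqDens]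
        · ring
        all_goals fun_prop

theorem integral_psi2OfSqrt_densityRatio_sq_le (hr : Measurable r) (hq : Measurable q)
    (hq' : Measurable q') (hr_fin : ∫⁻ x, r x ∂μ ≠ ∞) (hq_fin : ∫⁻ x, q x ∂μ ≠ ∞)
    (hq'_fin : ∫⁻ x, q' x ∂μ ≠ ∞) :
    ∫ x, psi2OfSqrt (densityRatio q q' x) ^ 2 ∂μ.withDensity r ≤
      2 * (hellingerSqDens μ r q + hellingerSqDens μ r q') := by
  have hA := integrable_sqrt_toReal_sub_sqrt_toReal_sq hr.aemeasurable hq.aemeasurable hr_fin hq_fin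
  have hB := integrable_sqrt_toReal_sub_sqrt_toReal_sq hr.aemeasurable hq'.aemeasurable hr_fin
    hq'_fin
  simp_rw [integral_withDensity_eq_integral_toReal_smul hr (ae_lt_top hr hr_fin), smul_eq_mul]
  calc ∫ x, (r x).toReal * psi2OfSqrt (densityRatio q q' x) ^ 2 ∂μ
      ≤ ∫ x, (√(r x).toReal - √(q x).toReal) ^ 2 + (√(r x).toReal - √(q' x).toReal) ^ 2 ∂μ := by
        refine integral_mono_ae (integrable_toReal_mul_psi2OfSqrt_densityRatio_pow 2 hr hq hq'
          hr_fin) (hA.add hB) ?_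
        filter_upwards [ae_lt_top hq hq_fin, ae_lt_top hq' hq'_fin] with x hx hx'
        exact toReal_mul_psi2OfSqrt_densityRatio_sq_le hx.ne hx'.ne
    _ = 2 * (hellingerSqDens μ r q + hellingerSqDens μ r q') := by
        rw [integral_add hA hB, hellingerSqDens, hellingerSqDens]
        ring

end Integrals

theorem psi2_expectation_bounds_general
    {𝒳 : Type*} [MeasurableSpace 𝒳] (μ : Measure 𝒳)
    (q q' r : 𝒳 → ℝ≥0∞) (hq : Measurable q) (hq' : Measurable q') (hr : Measurable r)
    (hq1 : ∫⁻ x, q x ∂μ = 1) (hq'1 : ∫⁻ x, q' x ∂μ = 1) (hr1 : ∫⁻ x, r x ∂μ = 1) :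
    (∫ x, psi2OfSqrt (densityRatio q q' x) ∂(μ.withDensity r) ≤
      4.97 * hellingerSqDens μ r q - 0.083 * hellingerSqDens μ r q') ∧
    ∫ x, (psi2OfSqrt (densityRatio q q' x)) ^ 2 ∂(μ.withDensity r) ≤
      (3 + 2 * Real.sqrt 2) * (hellingerSqDens μ r q + hellingerSqDens μ r q') := by
  have hr_fin : ∫⁻ x, r x ∂μ ≠ ∞ := hr1 ▸ one_ne_top
  have hq_fin : ∫⁻ x, q x ∂μ ≠ ∞ := hq1 ▸ one_ne_top
  have hq'_fin : ∫⁻ x, q' x ∂μ ≠ ∞ := hq'1 ▸ one_ne_top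
  refine ⟨integral_psi2OfSqrt_densityRatio_le hr hq hq' hr_fin hq_fin (hq'1.trans hq1.symm), ?_⟩
  calc ∫ x, psi2OfSqrt (densityRatio q q' x) ^ 2 ∂μ.withDensity r
      ≤ 2 * (hellingerSqDens μ r q + hellingerSqDens μ r q') :=
        integral_psi2OfSqrt_densityRatio_sq_le hr hq hq' hr_fin hq_fin hq'_fin
    _ ≤ (3 + 2 * √2) * (hellingerSqDens μ r q + hellingerSqDens μ r q') := by
        gcongr
        · exact add_nonneg (hellingerSqDens_nonneg r q) (hellingerSqDens_nonneg r q')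
        · linarith [Real.sqrt_nonneg 2]

/-- For probability densities `q, q', r` w.r.t. a σ-finite measure `μ`, with
`R = r·μ`, `Q = q·μ`, `Q' = q'·μ`, one has
`∫ ψ₂(√(q'/q)) dR ≤ 4.97·h²(R,Q) − 0.083·h²(R,Q')` and
`∫ ψ₂²(√(q'/q)) dR ≤ (3+2√2)·[h²(R,Q) + h²(R,Q')]`. -/
theorem psi2_expectation_bounds
    {𝒳 : Type*} [MeasurableSpace 𝒳] (μ : Measure 𝒳) [SigmaFinite μ]
    (q q' r : 𝒳 → ℝ≥0∞) (hq : Measurable q) (hq' : Measurable q') (hr : Measurable r)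
    (hq1 : ∫⁻ x, q x ∂μ = 1) (hq'1 : ∫⁻ x, q' x ∂μ = 1) (hr1 : ∫⁻ x, r x ∂μ = 1) :
    (∫ x, psi2OfSqrt (densityRatio q q' x) ∂(μ.withDensity r) ≤
      4.97 * hellingerSqDens μ r q - 0.083 * hellingerSqDens μ r q') ∧
    ∫ x, (psi2OfSqrt (densityRatio q q' x)) ^ 2 ∂(μ.withDensity r) ≤
      (3 + 2 * Real.sqrt 2) * (hellingerSqDens μ r q + hellingerSqDens μ r q') :=
  psi2_expectation_bounds_general μ q q' r hq hq' hr hq1 hq'1 hr1
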